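/- Let σ : ℝ → ℝ be monotone nondecreasing and let K ∈ ℕ. For k = 0,…,K let n_k, n_{k+1} ∈ ℕ be layer widths, let W^{(k)} be an n_{k+1} × n_k real matrix with entrywise bounds W^{(k),L} ≤ W^{(k)} ≤ W^{(k),U}, and b^{(k)} ∈ ℝ^{n_{k+1}} with b^{(k),L} ≤ b^{(k)} ≤ b^{(k),U}. Let x ∈ ℝ^{n_0} with x^L ≤ x ≤ x^U componentwise. Define the network by z^{(0)} = x, ζ^{(k+1)}_i = ∑_j W^{(k)}_{ij} z^{(k)}_j + b^{(k)}_i, and z^{(k)}_i = σ(ζ^{(k)}_i) for hidden layers k = 1,…,K. Define bounds recursively by z^{(0),L} = x^L, z^{(0),U} = x^U, t^{(k),L}_{ij} = min{W^{(k),L}_{ij} z^{(k),L}_j, W^{(k),U}_{ij} z^{(k),L}_j, W^{(k),L}_{ij} z^{(k),U}_j, W^{(k),U}_{ij} z^{(k),U}_j}, t^{(k),U}_{ij} = the analogous maximum, ζ^{(k+1),L}_i = ∑_j t^{(k),L}_{ij} + b^{(k),L}_i, ζ^{(k+1),U}_i = ∑_j t^{(k),U}_{ij} + b^{(k),U}_i,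 z^{(k),L} = σ(ζ^{(k),L}) and z^{(k),U} = σ(ζ^{(k),U}) componentwise. Then the network output satisfies ζ^{(K+1),L} ≤ ζ^{(K+1)} ≤ ζ^{(K+1),U} componentwise. -/
import Mathlib

lemma ibp_term_lb {wl w wu al a au : ℝ} (h1 : wl ≤ w) (h2 : w ≤ wu)
    (h3 : al ≤ a) (h4 : a ≤ au) :
    min (min (wl * al) (wu * al)) (min (wl * au) (wu * au)) ≤ w * a := by
  rcases le_total 0 a with ha | ha
  · calc min (min (wl * al) (wu * al)) (min (wl * au) (wu * au))
        ≤ min (wl * al) (wl * au) := le_min (min_le_left _ _ |>.trans (min_le_left _ _))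
          (min_le_right _ _ |>.trans (min_le_left _ _))
      _ ≤ wl * a := by
          rcases le_total 0 wl with hw | hw
          · exact (min_le_left _ _).trans (mul_le_mul_of_nonneg_left h3 hw)
          · exact (min_le_right _ _).trans (mul_le_mul_of_nonpos_left h4 hw)
      _ ≤ w * a := mul_le_mul_of_nonneg_right h1 ha
  · calc min (min (wl * al) (wu * al)) (min (wl * au) (wu * au))
        ≤ min (wu * al) (wu * au) := le_min (min_le_left _ _ |>.trans (min_le_right _ _))
          (min_le_right _ _ |>.trans (min_le_right _ _))
      _ ≤ wu * a := by
          rcases le_total 0 wu with hw | hw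
          · exact (min_le_left _ _).trans (mul_le_mul_of_nonneg_left h3 hw)
          · exact (min_le_right _ _).trans (mul_le_mul_of_nonpos_left h4 hw)
      _ ≤ w * a := mul_le_mul_of_nonpos_right h2 ha

lemma ibp_term_ub {wl w wu al a au : ℝ} (h1 : wl ≤ w) (h2 : w ≤ wu)
    (h3 : al ≤ a) (h4 : a ≤ au) :
    w * a ≤ max (max (wl * al) (wu * al)) (max (wl * au) (wu * au)) := by
  rcases le_total 0 a with ha | ha
  · calc w * a ≤ wu * a := mul_le_mul_of_nonneg_right h2 ha
      _ ≤ max (wu * al) (wu * au) := by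
          rcases le_total 0 wu with hw | hw
          · exact (mul_le_mul_of_nonneg_left h4 hw).trans (le_max_right _ _)
          · exact (mul_le_mul_of_nonpos_left h3 hw).trans (le_max_left _ _)
      _ ≤ _ := max_le ((le_max_right _ _).trans (le_max_left _ _))
          ((le_max_right _ _).trans (le_max_right _ _))
  · calc w * a ≤ wl * a := mul_le_mul_of_nonpos_right h1 ha
      _ ≤ max (wl * al) (wl * au) := by
          rcases le_total 0 wl with hw | hw
          · exact (mul_le_mul_of_nonneg_left h4 hw).trans (le_max_right _ _)
          · exact (mul_le_mul_of_nonpos_left h3 hw).trans (le_max_left _ _)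
      _ ≤ _ := max_le ((le_max_left _ _).trans (le_max_left _ _))
          ((le_max_left _ _).trans (le_max_right _ _))

/-- Proposition 3: soundness of interval bound propagation (IBP)
through a feed-forward network with `K` hidden layers and monotone activation `σ`,
when both the input and all weights/biases vary in intervals. -/
theorem ibp_network_sound
    (σ : ℝ → ℝ) (hσ : Monotone σ) (K : ℕ)
    (n : ℕ → ℕ)
    -- weights, biases and their entrywise interval bounds
    (W WL WU : (k : ℕ) → Fin (n (k + 1)) → Fin (n k) → ℝ)
    (b bL bU : (k : ℕ) → Fin (n (k + 1)) → ℝ)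
    (hW : ∀ k ≤ K, ∀ i j, WL k i j ≤ W k i j ∧ W k i j ≤ WU k i j)
    (hb : ∀ k ≤ K, ∀ i, bL k i ≤ b k i ∧ b k i ≤ bU k i)
    -- input and its interval bounds
    (x xL xU : Fin (n 0) → ℝ)
    (hx : ∀ i, xL i ≤ x i ∧ x i ≤ xU i)
    -- the network
    (z : (k : ℕ) → Fin (n k) → ℝ) (ζ : (k : ℕ) → Fin (n k) → ℝ)
    (hz0 : z 0 = x)
    (hζ : ∀ k ≤ K, ∀ i, ζ (k + 1) i = (∑ j, W k i j * z k j) + b k i)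
    (hzσ : ∀ k, 1 ≤ k → k ≤ K → ∀ i, z k i = σ (ζ k i))
    -- the propagated bounds
    (zL zU : (k : ℕ) → Fin (n k) → ℝ) (ζL ζU : (k : ℕ) → Fin (n k) → ℝ)
    (hzL0 : zL 0 = xL) (hzU0 : zU 0 = xU)
    (hζL : ∀ k ≤ K, ∀ i, ζL (k + 1) i =
      (∑ j, min (min (WL k i j * zL k j) (WU k i j * zL k j))
                (min (WL k i j * zU k j) (WU k i j * zU k j))) + bL k i)
    (hζU : ∀ k ≤ K, ∀ i, ζU (k + 1) i =
      (∑ j, max (max (WL k i j * zL k j) (WU k i j * zL k j))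
                (max (WL k i j * zU k j) (WU k i j * zU k j))) + bU k i)
    (hzLσ : ∀ k, 1 ≤ k → k ≤ K → ∀ i, zL k i = σ (ζL k i))
    (hzUσ : ∀ k, 1 ≤ k → k ≤ K → ∀ i, zU k i = σ (ζU k i)) :
    ∀ i, ζL (K + 1) i ≤ ζ (K + 1) i ∧ ζ (K + 1) i ≤ ζU (K + 1) i := by
  -- one-layer step: z-bounds at layer k give ζ-bounds at layer k+1
  have hstep : ∀ k, k ≤ K → (∀ j, zL k j ≤ z k j ∧ z k j ≤ zU k j) →
      ∀ i, ζL (k + 1) i ≤ ζ (k + 1) i ∧ ζ (k + 1) i ≤ ζU (k + 1) i := by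
    intro k hk hzb i
    rw [hζ k hk i, hζL k hk i, hζU k hk i]
    constructor
    · refine add_le_add (Finset.sum_le_sum fun j _ => ?_) (hb k hk i).1
      exact ibp_term_lb (hW k hk i j).1 (hW k hk i j).2 (hzb j).1 (hzb j).2
    · refine add_le_add (Finset.sum_le_sum fun j _ => ?_) (hb k hk i).2
      exact ibp_term_ub (hW k hk i j).1 (hW k hk i j).2 (hzb j).1 (hzb j).2
  -- inductive claim: z-bounds hold at every layer k ≤ K
  have main : ∀ k, k ≤ K → ∀ j, zL k j ≤ z k j ∧ z k j ≤ zU k j := by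
    intro k
    induction k with
    | zero => intro _ j; rw [hz0, hzL0, hzU0]; exact hx j
    | succ k ih =>
      intro hk j
      have hk' : k ≤ K := le_trans (Nat.le_succ k) hk
      have hζb := hstep k hk' (ih hk') j
      rw [hzσ (k + 1) (Nat.succ_le_succ (Nat.zero_le k)) hk j,
        hzLσ (k + 1) (Nat.succ_le_succ (Nat.zero_le k)) hk j,
        hzUσ (k + 1) (Nat.succ_le_succ (Nat.zero_le k)) hk j]
      exact ⟨hσ hζb.1, hσ hζb.2⟩
  exact hstep K le_rfl (main K le_rfl)
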